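/- arXiv:1904.10302 — 2 statements merged into one kernel-verified Lean document; each statement's English description precedes it below -/
import Mathlib

section
/- A residuated lattice A is quasicomplemented if and only if every prime filter of A that contains no dense element is a minimal prime filter. -/
/-- A (bounded, integral, commutative) residuated lattice. -/
class ResLattice (A : Type*) extends Lattice A, CommMonoid A, OrderBot A where
  himp : A → A → A
  adjunction : ∀ x y z : A, x * y ≤ z ↔ x ≤ himp y z
  le_one : ∀ x : A, x ≤ 1

variable {A : Type*} [ResLattice A]

/-- Coannihilator of a subset: `X^⊥ = {a | a ⊔ x = 1 for all x ∈ X}`. -/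
def Coann (X : Set A) : Set A := {a | ∀ x ∈ X, a ⊔ x = 1}

/-- Coannulet of an element: `x^⊥`. -/
def rperp (x : A) : Set A := Coann {x}

/-- The principal filter generated by `x`. -/
def PFil (x : A) : Set A := {a | ∃ n : ℕ, 0 < n ∧ x ^ n ≤ a}

/-- Filters of a residuated lattice. -/
def IsRLFilter (F : Set A) : Prop :=
  F.Nonempty ∧ (∀ x ∈ F, ∀ y ∈ F, x * y ∈ F) ∧ (∀ x ∈ F, ∀ y : A, x ⊔ y ∈ F)

/-- Prime filters. -/
def IsRLPrime (P : Set A) : Prop :=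
  IsRLFilter P ∧ P ≠ Set.univ ∧ ∀ x y : A, x ⊔ y ∈ P → x ∈ P ∨ y ∈ P

/-- Minimal prime filters. -/
def IsRLMinPrime (P : Set A) : Prop :=
  IsRLPrime P ∧ ∀ Q : Set A, IsRLPrime Q → Q ⊆ P → Q = P

/-- Quasicomplemented residuated lattice. -/
def Quasicomplemented (A : Type*) [ResLattice A] : Prop :=
  ∀ x : A, ∃ y : A, Coann (rperp x) = rperp y

/-- α-filters. -/
def IsAlphaFilter (F : Set A) : Prop :=
  IsRLFilter F ∧ ∀ x ∈ F, Coann (rperp x) ⊆ F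

/-- The α-filter generated by a subset. -/
def alphaGen (X : Set A) : Set A := ⋂₀ {G : Set A | IsAlphaFilter G ∧ X ⊆ G}


/-!
If `y^⊥ = x^⊥⊥`, then `x ⊔ y = 1`, so any prime filter `Q` contains `x` or `y`; and `x * y` is
dense because `(x * y)^⊥ = x^⊥ ∩ x^⊥⊥ = {1}`. Hence a prime filter without dense elements that
contains `x` has no prime subfilter missing `x`, i.e. it is minimal.

Conversely, let `F` be the filter generated by `x` and `x^⊥`. If `F` has a dense element
`d ≥ p * x^n` with `p ∈ x^⊥`, then `x^⊥⊥ = p^⊥`. Otherwise `F` extends to a prime filter `P`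
without dense elements, which is minimal by hypothesis. But a minimal prime filter containing `x`
misses some element of `x^⊥`, while `x^⊥ ⊆ F ⊆ P`.
-/

namespace ResLattice

instance : IsOrderedMonoid A where
  mul_le_mul_left a b h c :=
    (adjunction a c (b * c)).2 (h.trans ((adjunction b c (b * c)).1 le_rfl))

lemma eq_one_of_one_le {x : A} (h : 1 ≤ x) : x = 1 := (le_one x).antisymm h

lemma one_sup (a : A) : 1 ⊔ a = 1 := sup_eq_left.2 (le_one a)

lemma sup_one (a : A) : a ⊔ 1 = 1 := sup_eq_right.2 (le_one a)

lemma mul_le_left (a b : A) : a * b ≤ a := mul_le_of_le_one_right' (le_one b)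

lemma mul_le_right (a b : A) : a * b ≤ b := mul_le_of_le_one_left' (le_one a)

lemma sup_mul (a b c : A) : (a ⊔ b) * c = a * c ⊔ b * c :=
  eq_of_forall_ge_iff fun z => by
    rw [sup_le_iff, adjunction, adjunction, adjunction, sup_le_iff]

lemma mul_sup (a b c : A) : a * (b ⊔ c) = a * b ⊔ a * c := by
  rw [mul_comm, sup_mul, mul_comm b, mul_comm c]

lemma sup_mul_sup_le (a b c : A) : (a ⊔ b) * (a ⊔ c) ≤ a ⊔ b * c := by
  rw [sup_mul, mul_sup, mul_sup]
  exact sup_le (sup_le (le_sup_of_le_left (mul_le_left a a)) (le_sup_of_le_left (mul_le_left a c)))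
    (sup_le (le_sup_of_le_left (mul_le_right b a)) le_sup_right)

lemma sup_pow_le (a b : A) (n : ℕ) : (a ⊔ b) ^ n ≤ a ⊔ b ^ n := by
  induction n with
  | zero => simp
  | succ n ih =>
    calc (a ⊔ b) ^ (n + 1) = (a ⊔ b) ^ n * (a ⊔ b) := pow_succ _ _
      _ ≤ (a ⊔ b ^ n) * (a ⊔ b) := mul_le_mul_left ih _
      _ ≤ a ⊔ b ^ (n + 1) := pow_succ b n ▸ sup_mul_sup_le a _ b

end ResLattice

open ResLattice

section Coannihilators

lemma mem_rperp {a x : A} : a ∈ rperp x ↔ a ⊔ x = 1 := by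
  simp [rperp, Coann]

lemma one_mem_rperp (x : A) : (1 : A) ∈ rperp x :=
  mem_rperp.2 (one_sup x)

lemma one_mem_coann (X : Set A) : (1 : A) ∈ Coann X :=
  fun x _ => one_sup x

lemma rperp_mono {x y : A} (h : x ≤ y) : rperp x ⊆ rperp y := fun a ha =>
  mem_rperp.2 (eq_one_of_one_le (mem_rperp.1 ha ▸ sup_le_sup_left h a))

lemma rperp_mul (x y : A) : rperp (x * y) = rperp x ∩ rperp y := by
  refine Set.Subset.antisymm
    (fun a ha => ⟨rperp_mono (mul_le_left x y) ha, rperp_mono (mul_le_right x y) ha⟩) ?_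
  rintro a ⟨hx, hy⟩
  refine mem_rperp.2 (eq_one_of_one_le ?_)
  simpa [mem_rperp.1 hx, mem_rperp.1 hy] using sup_mul_sup_le a x y

lemma rperp_subset_rperp_pow (x : A) (n : ℕ) : rperp x ⊆ rperp (x ^ n) := fun a ha =>
  mem_rperp.2 (eq_one_of_one_le (by simpa [mem_rperp.1 ha] using sup_pow_le a x n))

lemma self_mem_coann_rperp (x : A) : x ∈ Coann (rperp x) := fun b hb => by
  rw [sup_comm]; exact mem_rperp.1 hb

lemma rperp_inter_coann_rperp (x : A) : rperp x ∩ Coann (rperp x) = {1} := by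
  refine Set.Subset.antisymm ?_ ?_
  · rintro a ⟨ha, ha'⟩
    simpa using ha' a ha
  · rintro a rfl
    exact ⟨one_mem_rperp x, one_mem_coann _⟩

lemma rperp_eq_singleton_one_iff {d : A} : rperp d = {1} ↔ ∀ a, a ⊔ d = 1 → a = 1 := by
  refine ⟨fun hd a ha => by simpa [hd] using mem_rperp.2 ha, fun hd => ?_⟩
  exact Set.Subset.antisymm (fun a ha => hd a (mem_rperp.1 ha)) (by simpa using one_mem_rperp d)

lemma isLowerSet_dense : IsLowerSet {d : A | rperp d = {1}} := by
  intro a b hba ha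
  simp only [Set.mem_ofPred_eq, rperp_eq_singleton_one_iff] at ha ⊢
  exact fun c hc => ha c (eq_one_of_one_le (hc ▸ sup_le_sup_left hba c))

lemma supClosed_dense : SupClosed {d : A | rperp d = {1}} := by
  intro a ha b hb
  simp only [Set.mem_ofPred_eq, rperp_eq_singleton_one_iff] at ha hb ⊢
  exact fun c hc => ha c (hb _ (by rwa [sup_assoc]))

lemma rperp_bot : rperp (⊥ : A) = {1} :=
  rperp_eq_singleton_one_iff.2 fun a ha => by rwa [sup_bot_eq] at ha

lemma coann_rperp_eq_rperp_of_dense {x p d : A} {n : ℕ} (hp : p ∈ rperp x)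
    (hd : rperp d = {1}) (hpd : p * x ^ n ≤ d) : Coann (rperp x) = rperp p := by
  refine Set.Subset.antisymm (fun a ha => mem_rperp.2 (ha p hp)) fun a ha c hc => ?_
  have hac : a ⊔ c ∈ rperp (p * x ^ n) := by
    rw [rperp_mul]
    constructor
    · rw [mem_rperp, sup_right_comm, mem_rperp.1 ha, one_sup]
    · rw [mem_rperp, sup_assoc, mem_rperp.1 (rperp_subset_rperp_pow x n hc), sup_one]
  simpa [hd] using rperp_mono hpd hac

end Coannihilators

section Filters

/-- The filter generated by `G` and `u`, when `G` is a filter. -/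
def filterAdjoin (G : Set A) (u : A) : Set A := {a | ∃ p ∈ G, ∃ n : ℕ, p * u ^ n ≤ a}

namespace IsRLFilter

variable {F : Set A}

lemma mem_of_le (hF : IsRLFilter F) {a b : A} (ha : a ∈ F) (h : a ≤ b) : b ∈ F := by
  simpa [sup_eq_right.2 h] using hF.2.2 a ha b

lemma one_mem (hF : IsRLFilter F) : (1 : A) ∈ F :=
  let ⟨a, ha⟩ := hF.1
  hF.mem_of_le ha (le_one a)

lemma pow_mem (hF : IsRLFilter F) {a : A} (ha : a ∈ F) (n : ℕ) : a ^ n ∈ F := by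
  induction n with
  | zero => simpa using hF.one_mem
  | succ n ih => simpa [pow_succ] using hF.2.1 _ ih a ha

lemma sup_pow_mem (hF : IsRLFilter F) {a b : A} (h : a ⊔ b ∈ F) (n : ℕ) : a ⊔ b ^ n ∈ F :=
  hF.mem_of_le (hF.pow_mem h n) (sup_pow_le a b n)

lemma adjoin (hF : IsRLFilter F) (u : A) : IsRLFilter (filterAdjoin F u) := by
  refine ⟨⟨1, 1, hF.one_mem, 0, by simp⟩, ?_, ?_⟩
  · rintro a ⟨p, hp, n, hpn⟩ b ⟨q, hq, m, hqm⟩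
    refine ⟨p * q, hF.2.1 p hp q hq, n + m, ?_⟩
    calc p * q * u ^ (n + m) = (p * u ^ n) * (q * u ^ m) := by rw [pow_add, mul_mul_mul_comm]
      _ ≤ a * b := mul_le_mul' hpn hqm
  · rintro a ⟨p, hp, n, hpn⟩ y
    exact ⟨p, hp, n, hpn.trans le_sup_left⟩

lemma self_mem_filterAdjoin (hF : IsRLFilter F) (u : A) : u ∈ filterAdjoin F u :=
  ⟨1, hF.one_mem, 1, by simp⟩

lemma sUnion_of_isChain {c : Set (Set A)} (hc : ∀ G ∈ c, IsRLFilter G)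
    (hchain : IsChain (· ⊆ ·) c) (hne : c.Nonempty) : IsRLFilter (⋃₀ c) := by
  obtain ⟨G₀, hG₀⟩ := hne
  refine ⟨⟨1, G₀, hG₀, (hc G₀ hG₀).one_mem⟩, ?_, ?_⟩
  · rintro a ⟨G₁, hG₁, ha⟩ b ⟨G₂, hG₂, hb⟩
    rcases hchain.total hG₁ hG₂ with h | h
    · exact ⟨G₂, hG₂, (hc G₂ hG₂).2.1 a (h ha) b hb⟩
    · exact ⟨G₁, hG₁, (hc G₁ hG₁).2.1 a ha b (h hb)⟩
  · rintro a ⟨G, hG, ha⟩ y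
    exact ⟨G, hG, (hc G hG).2.2 a ha y⟩

end IsRLFilter

lemma subset_filterAdjoin (G : Set A) (u : A) : G ⊆ filterAdjoin G u :=
  fun a ha => ⟨a, ha, 0, by simp⟩

lemma isRLFilter_singleton_one : IsRLFilter ({1} : Set A) := by
  refine ⟨⟨1, rfl⟩, ?_, ?_⟩
  · rintro a rfl b rfl
    simp
  · rintro a rfl y
    exact one_sup y

lemma isRLFilter_rperp (x : A) : IsRLFilter (rperp x) := by
  refine ⟨⟨1, one_mem_rperp x⟩, fun a ha b hb => ?_, fun a ha y => ?_⟩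
  · rw [mem_rperp, sup_comm]
    refine eq_one_of_one_le ?_
    simpa [sup_comm x, mem_rperp.1 ha, mem_rperp.1 hb] using sup_mul_sup_le x a b
  · rw [mem_rperp, sup_right_comm, mem_rperp.1 ha, one_sup]

end Filters

section PrimeFilters

variable {F J P : Set A}

lemma exists_mul_pow_mem_of_maximal (hJ : IsLowerSet J)
    (hP : Maximal (fun G => IsRLFilter G ∧ F ⊆ G ∧ Disjoint G J) P) {u : A} (hu : u ∉ P) :
    ∃ p ∈ P, ∃ n : ℕ, p * u ^ n ∈ J := by
  by_contra! h
  obtain ⟨hPF, hFP, hPJ⟩ := hP.prop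
  have hdisj : Disjoint (filterAdjoin P u) J :=
    Set.disjoint_left.2 fun a ⟨p, hp, n, hpn⟩ ha => h p hp n (hJ hpn ha)
  exact hu (hP.2 ⟨hPF.adjoin u, hFP.trans (subset_filterAdjoin P u), hdisj⟩
    (subset_filterAdjoin P u) (hPF.self_mem_filterAdjoin u))

lemma isRLPrime_of_maximal (hJ : IsLowerSet J) (hJs : SupClosed J) (hJne : J.Nonempty)
    (hP : Maximal (fun G => IsRLFilter G ∧ F ⊆ G ∧ Disjoint G J) P) : IsRLPrime P := by
  obtain ⟨hPF, -, hPJ⟩ := hP.prop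
  refine ⟨hPF, fun hP_univ => ?_, fun u v huv => ?_⟩
  · obtain ⟨j, hj⟩ := hJne
    exact Set.disjoint_left.1 hPJ (hP_univ ▸ Set.mem_univ j) hj
  by_contra! huv'
  obtain ⟨p, hp, n, hpn⟩ := exists_mul_pow_mem_of_maximal hJ hP huv'.1
  obtain ⟨q, hq, m, hqm⟩ := exists_mul_pow_mem_of_maximal hJ hP huv'.2
  have hmem : p * q * (u ^ n ⊔ v ^ m) ∈ P := by
    refine hPF.2.1 _ (hPF.2.1 p hp q hq) _ ?_
    have hvu : v ^ m ⊔ u ∈ P := sup_comm u (v ^ m) ▸ hPF.sup_pow_mem huv m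
    simpa [sup_comm] using hPF.sup_pow_mem hvu n
  have hJmem : p * q * (u ^ n ⊔ v ^ m) ∈ J := by
    rw [ResLattice.mul_sup]
    refine hJs (hJ ?_ hpn) (hJ ?_ hqm)
    · exact mul_le_mul_left (mul_le_left p q) _
    · exact mul_le_mul_left (mul_le_right p q) _
  exact Set.disjoint_left.1 hPJ hmem hJmem

lemma exists_isRLPrime_of_disjoint (hF : IsRLFilter F) (hJ : IsLowerSet J) (hJs : SupClosed J)
    (hJne : J.Nonempty) (hFJ : Disjoint F J) : ∃ P, IsRLPrime P ∧ F ⊆ P ∧ Disjoint P J := by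
  obtain ⟨P, hFP, hP⟩ := zorn_subset_nonempty {G | IsRLFilter G ∧ F ⊆ G ∧ Disjoint G J}
    (fun c hc hchain hne => ⟨⋃₀ c,
      ⟨IsRLFilter.sUnion_of_isChain (fun G hG => (hc hG).1) hchain hne,
        let ⟨G, hG⟩ := hne; (hc hG).2.1.trans (Set.subset_sUnion_of_mem hG),
        Set.disjoint_sUnion_left.2 fun G hG => (hc hG).2.2⟩,
      fun _ => Set.subset_sUnion_of_mem⟩)
    F ⟨hF, subset_rfl, hFJ⟩
  exact ⟨P, isRLPrime_of_maximal hJ hJs hJne hP, hFP, hP.prop.2.2⟩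

/-- The ideal generated by `x` and the complement of `P` avoids `1`; a prime filter avoiding it is
contained in `P` and misses `x`. -/
lemma IsRLMinPrime.exists_mem_rperp_notMem (hP : IsRLMinPrime P) {x : A} (hx : x ∈ P) :
    ∃ w ∈ rperp x, w ∉ P := by
  by_contra! hxP
  obtain ⟨⟨-, hP_ne, hP_prime⟩, hP_min⟩ := hP
  set J : Set A := {a | ∃ w ∉ P, a ≤ x ⊔ w}
  have hJ : IsLowerSet J := fun a b hba ⟨w, hw, haw⟩ => ⟨w, hw, hba.trans haw⟩
  have hJs : SupClosed J := by
    rintro a ⟨w, hw, haw⟩ b ⟨w', hw', hbw⟩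
    refine ⟨w ⊔ w', fun h => (hP_prime w w' h).elim hw hw', sup_le ?_ ?_⟩
    · exact haw.trans (sup_le_sup_left le_sup_left x)
    · exact hbw.trans (sup_le_sup_left le_sup_right x)
  obtain ⟨w₀, hw₀⟩ := (Set.ne_univ_iff_exists_notMem P).1 hP_ne
  have h1J : Disjoint ({1} : Set A) J := by
    rw [Set.disjoint_singleton_left]
    rintro ⟨w, hw, h1w⟩
    exact hw (hxP w (mem_rperp.2 (sup_comm x w ▸ eq_one_of_one_le h1w)))
  obtain ⟨Q, hQ, -, hQJ⟩ :=
    exists_isRLPrime_of_disjoint isRLFilter_singleton_one hJ hJs ⟨x, w₀, hw₀, le_sup_left⟩ h1J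
  have hQP : Q ⊆ P := fun a ha => by
    by_contra haP
    exact Set.disjoint_left.1 hQJ ha ⟨a, haP, le_sup_right⟩
  exact Set.disjoint_left.1 hQJ (hP_min Q hQ hQP ▸ hx) ⟨w₀, hw₀, le_sup_left⟩

end PrimeFilters

theorem stmt4 :
    Quasicomplemented A ↔
      ∀ P : Set A, IsRLPrime P → (¬ ∃ d ∈ P, rperp d = {1}) → IsRLMinPrime P := by
  constructor
  · intro hqc P hP hP_dense
    refine ⟨hP, fun Q hQ hQP => hQP.antisymm fun x hx => ?_⟩
    obtain ⟨y, hy⟩ := hqc x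
    have hxy : x ⊔ y = 1 := mem_rperp.1 (hy ▸ self_mem_coann_rperp x)
    refine (hQ.2.2 x y (hxy ▸ hQ.1.one_mem)).resolve_right fun hyQ => hP_dense ?_
    exact ⟨x * y, hP.1.2.1 x hx y (hQP hyQ), by rw [rperp_mul, ← hy, rperp_inter_coann_rperp]⟩
  · intro hmin x
    by_cases hF : ∃ d ∈ filterAdjoin (rperp x) x, rperp d = {1}
    · obtain ⟨d, ⟨p, hp, n, hpd⟩, hd⟩ := hF
      exact ⟨p, coann_rperp_eq_rperp_of_dense hp hd hpd⟩
    · obtain ⟨P, hP, hFP, hP_dense⟩ := exists_isRLPrime_of_disjoint ((isRLFilter_rperp x).adjoin x)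
        isLowerSet_dense supClosed_dense ⟨⊥, rperp_bot⟩
        (Set.disjoint_left.2 fun d hd hd_dense => hF ⟨d, hd, hd_dense⟩)
      have hP_min : IsRLMinPrime P :=
        hmin P hP fun ⟨d, hdP, hd⟩ => Set.disjoint_left.1 hP_dense hdP hd
      obtain ⟨w, hw, hwP⟩ := hP_min.exists_mem_rperp_notMem
        (hFP ((isRLFilter_rperp x).self_mem_filterAdjoin x))
      exact (hwP (hFP (subset_filterAdjoin _ x hw))).elim
end

section
/- In a residuated lattice, the lattice of principal filters is Boolean if and only if for every element a there exists b ∈ a^⊥ such that a ⊙ b is nilpotent. -/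
variable {A : Type*} [ResLattice A]

namespace ResLattice

instance isOrderedMonoid : IsOrderedMonoid A where
  mul_le_mul_left a b hab c := by
    rw [adjunction]
    exact hab.trans (by rw [← adjunction, mul_comm])

/- Multiplication by `x` is left adjoint to `himp x`, so it preserves joins. -/
protected lemma mul_sup_s9 (x y z : A) : x * (y ⊔ z) = x * y ⊔ x * z := by
  refine le_antisymm ?_ (sup_le (mul_le_mul_right le_sup_left x) (mul_le_mul_right le_sup_right x))
  rw [mul_comm, adjunction]
  exact sup_le (by rw [← adjunction, mul_comm]; exact le_sup_left)
    (by rw [← adjunction, mul_comm]; exact le_sup_right)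

protected lemma sup_mul_s9 (x y z : A) : (x ⊔ y) * z = x * z ⊔ y * z := by
  simp only [mul_comm _ z, ResLattice.mul_sup_s9]

lemma sup_mul_sup_le_s9 (x y z : A) : (x ⊔ z) * (y ⊔ z) ≤ x * y ⊔ z := by
  rw [ResLattice.sup_mul_s9, ResLattice.mul_sup_s9, ResLattice.mul_sup_s9]
  refine sup_le (sup_le le_sup_left ?_) (sup_le ?_ ?_) <;> apply le_sup_of_le_right
  · exact mul_le_of_le_one_left' (le_one x)
  · exact mul_le_of_le_one_right' (le_one y)
  · exact mul_le_of_le_one_right' (le_one z)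

lemma sup_pow_le_s9 (x z : A) : ∀ n : ℕ, (x ⊔ z) ^ n ≤ x ^ n ⊔ z
  | 0 => by simp
  | n + 1 => calc
      (x ⊔ z) ^ (n + 1) = (x ⊔ z) ^ n * (x ⊔ z) := pow_succ _ _
      _ ≤ (x ^ n ⊔ z) * (x ⊔ z) := mul_le_mul_left (sup_pow_le_s9 x z n) _
      _ ≤ x ^ (n + 1) ⊔ z := (sup_mul_sup_le_s9 _ _ _).trans_eq (by rw [pow_succ])

lemma sup_pow_mul_le (x y : A) (n m : ℕ) : (x ⊔ y) ^ (n * m) ≤ x ^ n ⊔ y ^ m := calc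
  (x ⊔ y) ^ (n * m) = ((x ⊔ y) ^ n) ^ m := pow_mul _ _ _
  _ ≤ (x ^ n ⊔ y) ^ m := pow_le_pow_left' (sup_pow_le_s9 x y n) m
  _ ≤ x ^ n ⊔ y ^ m := by rw [sup_comm, sup_comm (x ^ n)]; exact sup_pow_le_s9 y (x ^ n) m

lemma self_mem_PFil (x : A) : x ∈ PFil x := ⟨1, one_pos, (pow_one x).le⟩

lemma PFil_sup (x y : A) : PFil (x ⊔ y) = PFil x ∩ PFil y := by
  ext a
  constructor
  · rintro ⟨n, hn, hle⟩
    exact ⟨⟨n, hn, (pow_le_pow_left' le_sup_left n).trans hle⟩,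
      ⟨n, hn, (pow_le_pow_left' le_sup_right n).trans hle⟩⟩
  · rintro ⟨⟨n, hn, hxa⟩, ⟨m, hm, hya⟩⟩
    exact ⟨n * m, Nat.mul_pos hn hm, (sup_pow_mul_le x y n m).trans (sup_le hxa hya)⟩

lemma PFil_eq_singleton_one_iff {x : A} : PFil x = {1} ↔ x = 1 := by
  refine ⟨fun h => Set.mem_singleton_iff.mp (h ▸ self_mem_PFil x), ?_⟩
  rintro rfl
  ext a
  simp only [PFil, one_pow, Set.mem_ofPred_eq, Set.mem_singleton_iff]
  exact ⟨fun ⟨_, _, h⟩ => (le_one a).antisymm h, fun h => ⟨1, one_pos, h.ge⟩⟩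

lemma PFil_eq_univ_iff {x : A} : PFil x = Set.univ ↔ ∃ n : ℕ, 0 < n ∧ x ^ n = ⊥ := by
  refine ⟨fun h => ?_, fun ⟨n, hn, hx⟩ => Set.eq_univ_of_forall fun _ => ⟨n, hn, hx ▸ bot_le⟩⟩
  obtain ⟨n, hn, hx⟩ : (⊥ : A) ∈ PFil x := h ▸ Set.mem_univ _
  exact ⟨n, hn, le_bot_iff.mp hx⟩

end ResLattice

open ResLattice

theorem stmt9 :
    ((∀ x y z : A, PFil (x * (y ⊔ z)) = PFil (x * y) ∩ PFil (x * z)) ∧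
      ∀ x : A, ∃ y : A, PFil x ∩ PFil y = {1} ∧ PFil (x * y) = Set.univ) ↔
      ∀ a : A, ∃ b : A, b ⊔ a = 1 ∧ ∃ n : ℕ, 0 < n ∧ (a * b) ^ n = ⊥ := by
  have distrib (x y z : A) : PFil (x * (y ⊔ z)) = PFil (x * y) ∩ PFil (x * z) := by
    rw [ResLattice.mul_sup_s9, PFil_sup]
  refine (and_iff_right distrib).trans (forall_congr' fun a => exists_congr fun b => ?_)
  rw [← PFil_sup, PFil_eq_singleton_one_iff, PFil_eq_univ_iff, sup_comm]
end
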